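/- arXiv:1501.05463 — 2 statements merged into one kernel-verified Lean document; each statement's English description precedes it below -/
import Mathlib

section
/- Let A be a C*-algebra, let a be a positive element of A, and let p be a projection in A with a ≥ δ·p for some δ > 0. Then for every δ' with 0 ≤ δ' < δ, the projection p is Cuntz subequivalent to (a - δ')₊. -/
/-!
Since `(a - δ')₊ ≥ a - δ'`, compressing by `p` gives `p (a - δ')₊ p ≥ p a p - δ' p ≥ (δ - δ') p`.
Whenever `p b p ≥ r p` with `r > 0`, the element `d = p b p + r (1 - p)` dominates `r • 1`, hence
is invertible, and it commutes with `p`; so `x = d ^ (-1/2) p` gives exactly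
`x b x* = d ^ (-1/2) d d ^ (-1/2) p = p`, and the constant sequence `x` witnesses `p ≼ (a - δ')₊`.
-/

open Filter Topology

def CuntzBelow {A : Type*} [CStarAlgebra A] (a b : A) : Prop :=
  ∃ x : ℕ → A, Tendsto (fun n => ‖a - x n * b * star (x n)‖) atTop (𝓝 0)

noncomputable def cutoff {A : Type*} [CStarAlgebra A] (a : A) (δ : ℝ) : A :=
  cfc (fun t : ℝ => max (t - δ) 0) a

section

variable {A : Type*} [CStarAlgebra A]

theorem CuntzBelow.of_conj_eq {a b x : A} (h : x * b * star x = a) : CuntzBelow a b :=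
  ⟨fun _ => x, by simp [h]⟩

theorem IsStarProjection.conj_algebraMap {p : A} (hp : IsStarProjection p) (r : ℝ) :
    p * algebraMap ℝ A r * p = r • p := by
  rw [Algebra.algebraMap_eq_smul_one, mul_smul_comm, mul_one, smul_mul_assoc,
    hp.isIdempotentElem.eq]

section Order

variable [PartialOrder A] [StarOrderedRing A]

theorem sub_algebraMap_le_cutoff {a : A} (ha : IsSelfAdjoint a) (δ : ℝ) :
    a - algebraMap ℝ A δ ≤ cutoff a δ := by
  calc a - algebraMap ℝ A δ = cfc (fun t : ℝ => t - δ) a := by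
        rw [cfc_sub (fun t : ℝ => t) (fun _ => δ) a, cfc_id' ℝ a, cfc_const δ a]
    _ ≤ cutoff a δ := cfc_mono fun t _ => le_max_left _ _

theorem IsStarProjection.conj_le_conj {p a b : A} (hp : IsStarProjection p) (h : a ≤ b) :
    p * a * p ≤ p * b * p := by
  simpa only [hp.isSelfAdjoint.star_eq] using star_left_conjugate_le_conjugate h p

theorem IsStarProjection.exists_conj_eq_of_smul_le_conj {p b : A} (hp : IsStarProjection p)
    {r : ℝ} (hr : 0 < r) (h : r • p ≤ p * b * p) : ∃ x : A, x * b * star x = p := by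
  have hpp := hp.isIdempotentElem.eq
  set d := p * b * p + r • (1 - p)
  have hd : IsStrictlyPositive d := by
    refine (IsStrictlyPositive.smul hr isStrictlyPositive_one).of_le ?_
    calc r • (1 : A) = r • p + r • (1 - p) := by rw [← smul_add, add_sub_cancel]
      _ ≤ d := add_le_add_left h _
  have hdp : d * p = p * b * p := by
    rw [add_mul, smul_mul_assoc, hp.one_sub_mul_self, smul_zero, add_zero, mul_assoc, hpp]
  have hpd : p * d = p * b * p := by
    rw [mul_add, mul_smul_comm, hp.mul_one_sub_self, smul_zero, add_zero, ← mul_assoc,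
      ← mul_assoc, hpp]
  set g := d ^ (-(1 / 2) : ℝ)
  have hgp : Commute g p := Commute.cfc_nnreal (hpd.trans hdp.symm).symm _
  refine ⟨g * p, ?_⟩
  rw [star_mul, hp.isSelfAdjoint.star_eq, (CFC.rpow_nonneg (a := d)).isSelfAdjoint.star_eq]
  calc g * p * b * (p * g) = g * (d * p) * g := by rw [hdp]; noncomm_ring
    _ = g * d * g * p := by rw [mul_assoc, mul_assoc, ← hgp.eq]; noncomm_ring
    _ = p := by rw [CFC.conjugate_rpow_neg_one_half d, one_mul]

end Order

end

theorem stmt_3_general {A : Type*} [CStarAlgebra A] [PartialOrder A] [StarOrderedRing A] (a p : A) (ha : 0 ≤ a)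
    (hp₁ : star p = p) (hp₂ : p * p = p) (δ : ℝ)
    (h : δ • p ≤ a) (δ' : ℝ) (hδ' : δ' < δ) :
    CuntzBelow p (cutoff a δ') := by
  have hp : IsStarProjection p := ⟨hp₂, hp₁⟩
  have hpδp : p * (δ • p) * p = δ • p := by simp [hp₂]
  obtain ⟨x, hx⟩ := hp.exists_conj_eq_of_smul_le_conj (b := cutoff a δ') (sub_pos.mpr hδ') <| by
    calc (δ - δ') • p = p * (δ • p) * p - p * algebraMap ℝ A δ' * p := by
          rw [hpδp, hp.conj_algebraMap, sub_smul]
      _ ≤ p * a * p - p * algebraMap ℝ A δ' * p := by gcongr; exact hp.conj_le_conj h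
      _ = p * (a - algebraMap ℝ A δ') * p := by noncomm_ring
      _ ≤ p * cutoff a δ' * p := hp.conj_le_conj (sub_algebraMap_le_cutoff ha.isSelfAdjoint δ')
  exact .of_conj_eq hx

theorem stmt_3 {A : Type*} [CStarAlgebra A] [PartialOrder A] [StarOrderedRing A] (a p : A) (ha : 0 ≤ a)
    (hp₁ : star p = p) (hp₂ : p * p = p) (δ : ℝ) (hδ : 0 < δ)
    (h : δ • p ≤ a) (δ' : ℝ) (hδ'₀ : 0 ≤ δ') (hδ' : δ' < δ) :
    CuntzBelow p (cutoff a δ') :=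
  stmt_3_general a p ha hp₁ hp₂ δ h δ' hδ'
end

section
/- Let A be a C*-algebra and let a, b be positive elements with ‖a - b‖ < δ for some δ > 0. Then (a - δ)₊ is Cuntz subequivalent to b. -/
open Filter Topology

/-! With `r = ‖a - b‖`, functional calculus gives a self-adjoint `g` with `g a g = (a - δ)₊` and
`δ g² ≤ (a - δ)₊`; conjugating `a - r ≤ b` by `g` yields `(1 - r / δ) (a - δ)₊ ≤ g b g`. A positive
element is Cuntz below every element above it, and Cuntz subequivalence survives conjugating the
right-hand side and rescaling the left-hand side. -/

section

variable {A : Type*} [CStarAlgebra A]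

theorem cuntzBelow_of_forall_exists_norm_le {a b : A}
    (h : ∀ ε > 0, ∃ y : A, ‖a - y * b * star y‖ ≤ ε) : CuntzBelow a b := by
  choose y hy using fun n : ℕ => h (1 / (n + 1)) Nat.one_div_pos_of_nat
  exact ⟨y, squeeze_zero (fun _ => norm_nonneg _) hy tendsto_one_div_add_atTop_nhds_zero_nat⟩

theorem CuntzBelow.of_conj_right {a b : A} (z : A) (h : CuntzBelow a (z * b * star z)) :
    CuntzBelow a b := by
  obtain ⟨x, hx⟩ := h
  exact ⟨fun n => x n * z, by simpa only [star_mul, mul_assoc] using hx⟩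

theorem CuntzBelow.smul {a b : A} (h : CuntzBelow a b) {t : ℝ} (ht : 0 ≤ t) :
    CuntzBelow (t • a) b := by
  obtain ⟨x, hx⟩ := h
  refine ⟨fun n => √t • x n, ?_⟩
  have hsmul : ∀ n,
      t • a - (√t • x n) * b * star (√t • x n) = t • (a - x n * b * star (x n)) := by
    intro n
    rw [star_smul, star_trivial, smul_mul_assoc, smul_mul_assoc, mul_smul_comm, smul_smul,
      Real.mul_self_sqrt ht, smul_sub]
  simpa only [hsmul, norm_smul, Real.norm_of_nonneg ht, mul_zero] using hx.const_mul t

theorem cfc_mul_self_mul_cfc (f g : ℝ → ℝ) (u : A) (hu : IsSelfAdjoint u)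
    (hf : ContinuousOn f (spectrum ℝ u) := by cfc_cont_tac)
    (hg : ContinuousOn g (spectrum ℝ u) := by cfc_cont_tac) :
    cfc f u * u * cfc g u = cfc (fun t => f t * t * g t) u := by
  calc cfc f u * u * cfc g u = cfc f u * cfc (fun t => t) u * cfc g u := by rw [cfc_id' ℝ u]
    _ = _ := by rw [← cfc_mul .., ← cfc_mul ..]

variable [PartialOrder A] [StarOrderedRing A]

/-- `q = (c + ε)^{-1/2}` and `p = (ε / (c + ε))^{1/2}`, so that `p c p = ε c / (c + ε)`. -/
theorem exists_conj_add_mul_self_eq_one {c : A} (hc : 0 ≤ c) {ε : ℝ} (hε : 0 < ε) :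
    ∃ p q : A, IsSelfAdjoint p ∧ star q * c * q + p * p = 1 ∧ ‖p * c * p‖ ≤ ε := by
  have hc_sa : IsSelfAdjoint c := .of_nonneg hc
  set fp : ℝ → ℝ := fun t => √(ε / (max t 0 + ε))
  set fq : ℝ → ℝ := fun t => √(1 / (max t 0 + ε))
  have hfp : Continuous fp := by fun_prop (disch := intros; positivity)
  have hfq : Continuous fq := by fun_prop (disch := intros; positivity)
  refine ⟨cfc fp c, cfc fq c, cfc_predicate _ _, ?_, ?_⟩
  · rw [(cfc_predicate fq c).star_eq,
      cfc_mul_self_mul_cfc _ _ _ hc_sa hfq.continuousOn hfq.continuousOn,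
      ← cfc_mul _ _ _ hfp.continuousOn hfp.continuousOn,
      ← cfc_add (a := c) (fun t => fq t * t * fq t) (fun t => fp t * fp t) (by fun_prop)
        (by fun_prop), ← cfc_const_one ℝ c]
    refine cfc_congr fun t ht => ?_
    have ht : 0 ≤ t := spectrum_nonneg_of_nonneg hc ht
    have htε : 0 < t + ε := by positivity
    simp only [fp, fq, max_eq_left ht]
    rw [mul_right_comm, Real.mul_self_sqrt (by positivity), Real.mul_self_sqrt (by positivity)]
    field_simp
  · rw [cfc_mul_self_mul_cfc _ _ _ hc_sa hfp.continuousOn hfp.continuousOn]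
    refine norm_cfc_le hε.le fun t ht => ?_
    have ht : 0 ≤ t := spectrum_nonneg_of_nonneg hc ht
    have htε : 0 < t + ε := by positivity
    simp only [fp, max_eq_left ht]
    rw [mul_right_comm, Real.mul_self_sqrt (by positivity), Real.norm_of_nonneg (by positivity),
      div_mul_eq_mul_div, div_le_iff₀ htε]
    nlinarith

theorem cuntzBelow_of_le {x c : A} (hx : 0 ≤ x) (hxc : x ≤ c) : CuntzBelow x c := by
  refine cuntzBelow_of_forall_exists_norm_le fun ε hε => ?_
  obtain ⟨p, q, hp, hqp, hpcp⟩ := exists_conj_add_mul_self_eq_one (hx.trans hxc) hε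
  set X := CFC.sqrt x
  have hX : IsSelfAdjoint X := .of_nonneg (CFC.sqrt_nonneg x)
  have hXX : X * X = x := CFC.sqrt_mul_sqrt_self x
  refine ⟨X * star q, ?_⟩
  have hdiff : x - X * star q * c * star (X * star q) = star (p * X) * (p * X) := by
    rw [star_mul, star_star, hX.star_eq, star_mul, hX.star_eq, hp.star_eq,
      show X * star q * c * (q * X) = X * (star q * c * q) * X by simp only [mul_assoc],
      eq_sub_of_add_eq hqp, ← hXX]
    noncomm_ring
  calc ‖x - X * star q * c * star (X * star q)‖ = ‖star (p * X) * (p * X)‖ := by rw [hdiff]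
    _ = ‖p * x * p‖ := by
      rw [CStarRing.norm_star_mul_self, ← CStarRing.norm_self_mul_star, star_mul, hX.star_eq,
        hp.star_eq, ← hXX]
      simp only [mul_assoc]
    _ ≤ ‖p * c * p‖ := CStarAlgebra.norm_le_norm_of_nonneg_of_le (hp.conjugate_nonneg hx)
      (hp.conjugate_le_conjugate hxc)
    _ ≤ ε := hpcp

theorem exists_conj_eq_cutoff {a : A} (ha : IsSelfAdjoint a) {δ : ℝ} (hδ : 0 < δ) :
    ∃ g : A, IsSelfAdjoint g ∧ g * a * g = cutoff a δ ∧ δ • (g * g) ≤ cutoff a δ := by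
  set f : ℝ → ℝ := fun t => √(max (t - δ) 0 / max t δ)
  have hmax : ∀ t, 0 < max t δ := fun t => lt_max_of_lt_right hδ
  have hf : Continuous f := by fun_prop (disch := exact fun t => (hmax t).ne')
  have hff : ∀ t, f t * f t = max (t - δ) 0 / max t δ := fun t =>
    Real.mul_self_sqrt (div_nonneg (le_max_right _ _) (hmax t).le)
  refine ⟨cfc f a, cfc_predicate _ _, ?_, ?_⟩
  · rw [cfc_mul_self_mul_cfc _ _ _ ha hf.continuousOn hf.continuousOn, cutoff]
    refine cfc_congr fun t _ => ?_
    rw [mul_right_comm, hff]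
    rcases le_or_gt t δ with ht | ht
    · simp [max_eq_right (sub_nonpos.mpr ht)]
    · rw [max_eq_left ht.le, div_mul_cancel₀ _ (hδ.trans ht).ne']
  · rw [← cfc_mul _ _ _ hf.continuousOn hf.continuousOn, ← cfc_smul .., cutoff]
    refine cfc_mono (fun t _ => ?_) (by fun_prop) (by fun_prop)
    rw [hff, smul_eq_mul, mul_div_left_comm]
    exact mul_le_of_le_one_right (le_max_right _ _)
      ((div_le_one (hmax t)).mpr (le_max_right _ _))

theorem exists_smul_cutoff_le_conj {a b : A} (ha : IsSelfAdjoint a) (hb : IsSelfAdjoint b)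
    {δ : ℝ} (hδ : 0 < δ) : ∃ g : A, (1 - ‖a - b‖ / δ) • cutoff a δ ≤ g * b * star g := by
  obtain ⟨g, hg, hgag, hgg⟩ := exists_conj_eq_cutoff ha hδ
  set r := ‖a - b‖
  have hab : a - algebraMap ℝ A r ≤ b := sub_le_comm.mp (ha.sub hb).le_algebraMap_norm_self
  refine ⟨g, ?_⟩
  calc (1 - r / δ) • cutoff a δ = cutoff a δ - (r / δ) • cutoff a δ := by
        rw [sub_smul, one_smul]
    _ ≤ cutoff a δ - r • (g * g) := by
        refine sub_le_sub_left ?_ _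
        calc r • (g * g) = (r / δ) • δ • (g * g) := by rw [smul_smul, div_mul_cancel₀ _ hδ.ne']
          _ ≤ (r / δ) • cutoff a δ := smul_le_smul_of_nonneg_left hgg (by positivity)
    _ = g * (a - algebraMap ℝ A r) * g := by
        rw [mul_sub, sub_mul, hgag, Algebra.algebraMap_eq_smul_one, mul_smul_comm, mul_one,
          smul_mul_assoc]
    _ ≤ g * b * star g := by rw [hg.star_eq]; exact hg.conjugate_le_conjugate hab

end

theorem stmt_5 {A : Type*} [CStarAlgebra A] [PartialOrder A] [StarOrderedRing A] (a b : A) (ha : 0 ≤ a) (hb : 0 ≤ b)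
    (δ : ℝ) (hδ : 0 < δ) (h : ‖a - b‖ < δ) :
    CuntzBelow (cutoff a δ) b := by
  obtain ⟨g, hle⟩ := exists_smul_cutoff_le_conj ha.isSelfAdjoint hb.isSelfAdjoint hδ
  have hr : 0 < 1 - ‖a - b‖ / δ := by rw [sub_pos, div_lt_one hδ]; exact h
  have hcut : 0 ≤ cutoff a δ := cfc_nonneg fun t _ => le_max_right _ _
  have := ((cuntzBelow_of_le (smul_nonneg hr.le hcut) hle).of_conj_right g).smul
    (inv_nonneg.mpr hr.le)
  rwa [smul_smul, inv_mul_cancel₀ hr.ne', one_smul] at this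
end
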